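/- Let α > −1 and β > −1 be real numbers and let R = {(x,y) ∈ ℝ² : y² < x < 1}. (i) For every τ with 0 ≤ τ < 1, the integral ∫_R (1−x)^α (x−y²)^β / (1 − τx − (1−τ)y) dx dy is infinite if and only if α + β ≤ −1. (ii) For τ = 1, the integral ∫_R (1−x)^{α−1}(x−y²)^β dx dy is infinite if and only if α ≤ 0. -/

import Mathlib

/-! Substituting `x = y² + (1 - y²) z` turns the integral over `x ∈ (y², 1)` of
`(1 - x)^a (x - y²)^b` into `(1 - y²)^(a + b + 1)` times a Beta integral, and the remaining
integral over `y ∈ (-1, 1)` is again a Beta integral. Hence `(1 - y)^c (1 - x)^a (x - y²)^b`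
integrates over `R` to a product of two Beta integrals, infinite iff one of the four exponents
is `≤ -1`. Part (ii) is the case `c = 0`; for part (i), on `R` the denominator
`1 - τx - (1 - τ)y` lies between `(1 - τ)(1 - y)` and `2(1 - y)`, so for `τ < 1` the integrand
is comparable to the case `c = -1`. -/

open MeasureTheory Set
open scoped ENNReal

theorem lintegral_eq_top_iff_of_le_of_le {X : Type*} [MeasurableSpace X] {μ : Measure X}
    {f g : X → ℝ≥0∞} {c C : ℝ≥0∞} (hc : c ≠ 0) (hC : C ≠ ∞)
    (hfg : ∀ᵐ x ∂μ, c * f x ≤ g x) (hgf : ∀ᵐ x ∂μ, g x ≤ C * f x) :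
    ∫⁻ x, g x ∂μ = ∞ ↔ ∫⁻ x, f x ∂μ = ∞ := by
  constructor
  · intro hg
    by_contra hf
    have : ∫⁻ x, g x ∂μ ≤ C * ∫⁻ x, f x ∂μ :=
      (lintegral_mono_ae hgf).trans_eq (lintegral_const_mul' C f hC)
    exact ENNReal.mul_ne_top hC hf (top_le_iff.1 (hg ▸ this))
  · intro hf
    refine top_le_iff.1 ?_
    calc ∞ = c * ∫⁻ x, f x ∂μ := by rw [hf, ENNReal.mul_top hc]
      _ ≤ ∫⁻ x, c * f x ∂μ := lintegral_const_mul_le c f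
      _ ≤ ∫⁻ x, g x ∂μ := lintegral_mono_ae hfg

theorem setLIntegral_Ioo_eq_mul_setLIntegral_Ioo_zero_one {u v : ℝ} (huv : u < v)
    (g : ℝ → ℝ≥0∞) :
    ∫⁻ x in Ioo u v, g x = ENNReal.ofReal (v - u) * ∫⁻ z in Ioo (0 : ℝ) 1, g (u + (v - u) * z) := by
  have hvu : 0 < v - u := sub_pos.2 huv
  have himage : (fun z => (v - u) * z + u) '' Ioo 0 1 = Ioo u v := by
    rw [image_affine_Ioo hvu]; simp
  have hderiv (z : ℝ) : HasDerivAt (fun z => (v - u) * z + u) (v - u) z := by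
    simpa using ((hasDerivAt_id z).const_mul (v - u)).add_const u
  rw [← himage, lintegral_image_eq_lintegral_abs_deriv_mul measurableSet_Ioo
    (fun z _ => (hderiv z).hasDerivWithinAt) (fun a _ b _ h => by simpa [hvu.ne'] using h),
    abs_of_pos hvu, lintegral_const_mul' _ _ ENNReal.ofReal_ne_top]
  simp only [add_comm]

theorem setLIntegral_Ioo_zero_one_comp_one_sub (g : ℝ → ℝ≥0∞) :
    ∫⁻ t in Ioo (0 : ℝ) 1, g (1 - t) = ∫⁻ t in Ioo (0 : ℝ) 1, g t := by
  have himage : (fun t : ℝ => 1 - t) '' Ioo 0 1 = Ioo 0 1 := by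
    rw [image_const_sub_Ioo]; norm_num
  conv_rhs => rw [← himage]
  rw [lintegral_image_eq_lintegral_abs_deriv_mul measurableSet_Ioo
    (f' := fun _ => -1) (fun t _ => (hasDerivAt_id' t).const_sub 1 |>.hasDerivWithinAt)
    sub_right_injective.injOn]
  simp

theorem setLIntegral_Ioo_zero_rpow_eq_top_iff {c q : ℝ} (hc : 0 < c) :
    ∫⁻ t in Ioo 0 c, ENNReal.ofReal (t ^ q) = ∞ ↔ q ≤ -1 := by
  rw [← not_lt, ← intervalIntegral.integrableOn_Ioo_rpow_iff hc, IntegrableOn,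
    ← lintegral_ofReal_ne_top_iff_integrable (by fun_prop)
      (ae_restrict_of_forall_mem measurableSet_Ioo fun t ht => Real.rpow_nonneg ht.1.le q),
    not_not]

theorem rpow_le_max_one_rpow {p c s : ℝ} (hc : 0 < c) (hcs : c ≤ s) (hs : s ≤ 1) :
    s ^ p ≤ max 1 (c ^ p) := by
  rcases le_or_gt 0 p with hp | hp
  · exact le_max_of_le_left (Real.rpow_le_one (hc.le.trans hcs) hs hp)
  · exact le_max_of_le_right (Real.rpow_le_rpow_of_nonpos hc hcs hp.le)

theorem min_one_rpow_le_rpow {p c s : ℝ} (hc : 0 < c) (hcs : c ≤ s) (hs : s ≤ 1) :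
    min 1 (c ^ p) ≤ s ^ p := by
  rcases le_or_gt 0 p with hp | hp
  · exact min_le_of_right_le (Real.rpow_le_rpow hc.le hcs hp)
  · exact min_le_of_left_le (Real.one_le_rpow_of_pos_of_le_one_of_nonpos (hc.trans_le hcs) hs hp.le)

/-- `betaLIntegral p q = B(q + 1, p + 1)`, as an extended real so that it may be `∞`. -/
noncomputable def betaLIntegral (p q : ℝ) : ℝ≥0∞ :=
  ∫⁻ t in Ioo (0 : ℝ) 1, ENNReal.ofReal ((1 - t) ^ p * t ^ q)

theorem betaLIntegral_comm (p q : ℝ) : betaLIntegral p q = betaLIntegral q p := by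
  rw [betaLIntegral, ← setLIntegral_Ioo_zero_one_comp_one_sub]
  simp [betaLIntegral, mul_comm]

theorem betaLIntegral_ne_zero (p q : ℝ) : betaLIntegral p q ≠ 0 := by
  have hsupp : Ioo (0 : ℝ) 1 ⊆ Function.support fun t => ENNReal.ofReal ((1 - t) ^ p * t ^ q) :=
    fun t ⟨ht0, ht1⟩ => by
      simpa using mul_pos (Real.rpow_pos_of_pos (sub_pos.2 ht1) p) (Real.rpow_pos_of_pos ht0 q)
  rw [← pos_iff_ne_zero, betaLIntegral, setLIntegral_pos_iff (by fun_prop),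
    inter_eq_right.2 hsupp, Real.volume_Ioo]
  norm_num

theorem betaLIntegral_lt_top {p q : ℝ} (hp : -1 < p) (hq : -1 < q) : betaLIntegral p q < ∞ := by
  set A := max 1 ((1 / 2 : ℝ) ^ p)
  set B := max 1 ((1 / 2 : ℝ) ^ q)
  have hA : 0 ≤ A := zero_le_one.trans (le_max_left _ _)
  have hB : 0 ≤ B := zero_le_one.trans (le_max_left _ _)
  have hbound : ∀ t ∈ Ioo (0 : ℝ) 1, ENNReal.ofReal ((1 - t) ^ p * t ^ q) ≤
      ENNReal.ofReal A * ENNReal.ofReal (t ^ q) +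
        ENNReal.ofReal B * ENNReal.ofReal ((1 - t) ^ p) := by
    rintro t ⟨ht0, ht1⟩
    have htq : 0 ≤ t ^ q := Real.rpow_nonneg ht0.le q
    have htp : 0 ≤ (1 - t) ^ p := Real.rpow_nonneg (by linarith) p
    rw [← ENNReal.ofReal_mul hA, ← ENNReal.ofReal_mul hB,
      ← ENNReal.ofReal_add (by positivity) (by positivity)]
    refine ENNReal.ofReal_le_ofReal ?_
    rcases le_total t (1 / 2) with ht | ht
    · have := rpow_le_max_one_rpow (p := p) (by norm_num) (by linarith : 1 / 2 ≤ 1 - t)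
        (by linarith)
      nlinarith [mul_le_mul_of_nonneg_right this htq, mul_nonneg hB htp]
    · have := rpow_le_max_one_rpow (p := q) (by norm_num) ht ht1.le
      nlinarith [mul_le_mul_of_nonneg_left this htp, mul_nonneg hA htq]
  have hfin (r : ℝ) (hr : -1 < r) : ∫⁻ t in Ioo (0 : ℝ) 1, ENNReal.ofReal (t ^ r) ≠ ∞ :=
    (setLIntegral_Ioo_zero_rpow_eq_top_iff one_pos).not.2 (not_le.2 hr)
  calc betaLIntegral p q
      ≤ ∫⁻ t in Ioo (0 : ℝ) 1, (ENNReal.ofReal A * ENNReal.ofReal (t ^ q)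
          + ENNReal.ofReal B * ENNReal.ofReal ((1 - t) ^ p)) :=
        setLIntegral_mono' measurableSet_Ioo hbound
    _ = (ENNReal.ofReal A * ∫⁻ t in Ioo (0 : ℝ) 1, ENNReal.ofReal (t ^ q))
          + ENNReal.ofReal B * ∫⁻ t in Ioo (0 : ℝ) 1, ENNReal.ofReal (t ^ p) := by
        rw [lintegral_add_left (by fun_prop), lintegral_const_mul' _ _ ENNReal.ofReal_ne_top,
          lintegral_const_mul' _ _ ENNReal.ofReal_ne_top,
          setLIntegral_Ioo_zero_one_comp_one_sub fun t => ENNReal.ofReal (t ^ p)]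
    _ < ∞ := by have := hfin q hq; have := hfin p hp; finiteness

theorem betaLIntegral_eq_top_of_right (p : ℝ) {q : ℝ} (hq : q ≤ -1) : betaLIntegral p q = ∞ := by
  set m := min 1 ((1 / 2 : ℝ) ^ p)
  have hm : 0 < m := lt_min one_pos (by positivity)
  have hbound : ∀ t ∈ Ioo (0 : ℝ) (1 / 2),
      ENNReal.ofReal m * ENNReal.ofReal (t ^ q) ≤ ENNReal.ofReal ((1 - t) ^ p * t ^ q) := by
    rintro t ⟨ht0, ht1⟩
    rw [← ENNReal.ofReal_mul hm.le]
    exact ENNReal.ofReal_le_ofReal (mul_le_mul_of_nonneg_right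
      (min_one_rpow_le_rpow (by norm_num) (by linarith) (by linarith)) (Real.rpow_nonneg ht0.le q))
  refine top_le_iff.1 ?_
  calc ∞ = ENNReal.ofReal m * ∫⁻ t in Ioo (0 : ℝ) (1 / 2), ENNReal.ofReal (t ^ q) := by
        rw [(setLIntegral_Ioo_zero_rpow_eq_top_iff (by norm_num)).2 hq,
          ENNReal.mul_top (ENNReal.ofReal_pos.2 hm).ne']
    _ = ∫⁻ t in Ioo (0 : ℝ) (1 / 2), ENNReal.ofReal m * ENNReal.ofReal (t ^ q) :=
        (lintegral_const_mul' _ _ ENNReal.ofReal_ne_top).symm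
    _ ≤ ∫⁻ t in Ioo (0 : ℝ) (1 / 2), ENNReal.ofReal ((1 - t) ^ p * t ^ q) :=
        setLIntegral_mono' measurableSet_Ioo hbound
    _ ≤ betaLIntegral p q := lintegral_mono_set (Ioo_subset_Ioo_right (by norm_num))

theorem betaLIntegral_eq_top_iff {p q : ℝ} : betaLIntegral p q = ∞ ↔ p ≤ -1 ∨ q ≤ -1 := by
  refine ⟨fun h => ?_, ?_⟩
  · by_contra! hpq
    exact (betaLIntegral_lt_top hpq.1 hpq.2).ne h
  · rintro (hp | hq)
    · rw [betaLIntegral_comm]; exact betaLIntegral_eq_top_of_right q hp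
    · exact betaLIntegral_eq_top_of_right p hq

theorem setLIntegral_Ioo_rpow_mul_rpow {u v : ℝ} (huv : u < v) (p q : ℝ) :
    ∫⁻ x in Ioo u v, ENNReal.ofReal ((v - x) ^ p * (x - u) ^ q) =
      ENNReal.ofReal ((v - u) ^ (p + q + 1)) * betaLIntegral p q := by
  have hvu : 0 < v - u := sub_pos.2 huv
  rw [setLIntegral_Ioo_eq_mul_setLIntegral_Ioo_zero_one huv, betaLIntegral,
    ← lintegral_const_mul' _ _ ENNReal.ofReal_ne_top,
    ← lintegral_const_mul' _ _ ENNReal.ofReal_ne_top]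
  refine setLIntegral_congr_fun measurableSet_Ioo fun z ⟨hz0, hz1⟩ => ?_
  rw [← ENNReal.ofReal_mul hvu.le, ← ENNReal.ofReal_mul (by positivity)]
  congr 1
  rw [show v - (u + (v - u) * z) = (v - u) * (1 - z) by ring,
    show u + (v - u) * z - u = (v - u) * z by ring, Real.mul_rpow hvu.le (by linarith),
    Real.mul_rpow hvu.le hz0.le, Real.rpow_add hvu, Real.rpow_add hvu, Real.rpow_one]
  ring

def parabolicDomain : Set (ℝ × ℝ) := {p | p.2 ^ 2 < p.1 ∧ p.1 < 1}

theorem measurableSet_parabolicDomain : MeasurableSet parabolicDomain :=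
  (measurableSet_lt (by fun_prop) measurable_fst).inter
    (measurableSet_lt measurable_fst measurable_const)

theorem lintegral_parabolicDomain_eq_iterated {F : ℝ × ℝ → ℝ≥0∞} (hF : Measurable F) :
    ∫⁻ p in parabolicDomain, F p = ∫⁻ y in Ioo (-1 : ℝ) 1, ∫⁻ x in Ioo (y ^ 2) 1, F (x, y) := by
  have hsupp : (Function.support fun y : ℝ => ∫⁻ x in Ioo (y ^ 2) 1, F (x, y)) ⊆ Ioo (-1) 1 := by
    intro y hy
    by_contra hy'
    have hy2 : ¬ y ^ 2 < 1 := fun h => hy' (abs_lt.1 ((sq_lt_one_iff_abs_lt_one y).1 h))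
    rw [Function.mem_support, Ioo_eq_empty hy2, Measure.restrict_empty,
      lintegral_zero_measure] at hy
    exact hy rfl
  rw [setLIntegral_eq_of_support_subset hsupp,
    ← lintegral_indicator measurableSet_parabolicDomain, Measure.volume_eq_prod,
    lintegral_prod_symm' _ (hF.indicator measurableSet_parabolicDomain)]
  refine lintegral_congr fun y => ?_
  rw [← lintegral_indicator measurableSet_Ioo]
  -- `(x, y) ∈ parabolicDomain` unfolds to `x ∈ Ioo (y ^ 2) 1`
  rfl

theorem lintegral_parabolicDomain_rpow (a b c : ℝ) :
    ∫⁻ p in parabolicDomain, ENNReal.ofReal ((1 - p.2) ^ c * ((1 - p.1) ^ a * (p.1 - p.2 ^ 2) ^ b))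
      = ENNReal.ofReal (2 ^ ((a + b + c + 1) + (a + b + 1) + 1)) *
          betaLIntegral (a + b + c + 1) (a + b + 1) * betaLIntegral a b := by
  have hinner : ∀ y ∈ Ioo (-1 : ℝ) 1,
      ∫⁻ x in Ioo (y ^ 2) 1, ENNReal.ofReal ((1 - y) ^ c * ((1 - x) ^ a * (x - y ^ 2) ^ b))
        = ENNReal.ofReal ((1 - y) ^ (a + b + c + 1) * (y - -1) ^ (a + b + 1)) *
            betaLIntegral a b := by
    rintro y ⟨hy0, hy1⟩
    have hu : 0 < 1 - y := by linarith
    have hv : 0 < y - -1 := by linarith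
    simp_rw [ENNReal.ofReal_mul (Real.rpow_nonneg hu.le c)]
    rw [lintegral_const_mul' _ _ ENNReal.ofReal_ne_top,
      setLIntegral_Ioo_rpow_mul_rpow (by nlinarith), ← mul_assoc,
      ← ENNReal.ofReal_mul (by positivity),
      show 1 - y ^ 2 = (1 - y) * (y - -1) by ring, Real.mul_rpow hu.le hv.le, ← mul_assoc,
      ← Real.rpow_add hu]
    ring_nf
  rw [lintegral_parabolicDomain_eq_iterated (by fun_prop),
    setLIntegral_congr_fun measurableSet_Ioo hinner, lintegral_mul_const _ (by fun_prop),
    setLIntegral_Ioo_rpow_mul_rpow (by norm_num), show (1 : ℝ) - -1 = 2 by norm_num]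

theorem lintegral_parabolicDomain_rpow_eq_top_iff (a b c : ℝ) :
    ∫⁻ p in parabolicDomain, ENNReal.ofReal ((1 - p.2) ^ c * ((1 - p.1) ^ a * (p.1 - p.2 ^ 2) ^ b))
      = ∞ ↔ a + b + c + 1 ≤ -1 ∨ a + b + 1 ≤ -1 ∨ a ≤ -1 ∨ b ≤ -1 := by
  have h2 : ENNReal.ofReal (2 ^ ((a + b + c + 1) + (a + b + 1) + 1)) ≠ 0 :=
    (ENNReal.ofReal_pos.2 (by positivity)).ne'
  simp only [lintegral_parabolicDomain_rpow, ENNReal.mul_eq_top, ne_eq, mul_eq_zero, h2,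
    betaLIntegral_ne_zero, ENNReal.ofReal_ne_top, betaLIntegral_eq_top_iff, or_false,
    not_false_eq_true, true_and, and_true]
  tauto

theorem sub_mul_sub_mul_mem_Icc_of_mem_parabolicDomain {τ : ℝ} (hτ0 : 0 ≤ τ) (hτ1 : τ < 1)
    {p : ℝ × ℝ} (hp : p ∈ parabolicDomain) :
    1 - τ * p.1 - (1 - τ) * p.2 ∈ Icc ((1 - τ) * (1 - p.2)) (2 * (1 - p.2)) := by
  obtain ⟨hx0, hx1⟩ := hp
  have hy1 : p.2 < 1 := by nlinarith
  have hτy : τ * p.2 ≤ τ := by nlinarith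
  constructor <;> nlinarith [mul_le_mul_of_nonneg_left hx0.le hτ0,
    mul_nonneg (sub_nonneg.2 hy1.le) (sub_nonneg.2 (hτy.trans hτ1.le))]

theorem ofReal_div_bounds_of_mem_Icc {w d D k K : ℝ} (hw : 0 ≤ w) (hk : 0 < k) (hd : 0 < d)
    (hD : D ∈ Icc (k * d) (K * d)) :
    ENNReal.ofReal K⁻¹ * ENNReal.ofReal (d ^ (-1 : ℝ) * w) ≤ ENNReal.ofReal (w / D) ∧
      ENNReal.ofReal (w / D) ≤ ENNReal.ofReal k⁻¹ * ENNReal.ofReal (d ^ (-1 : ℝ) * w) := by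
  have hkd : 0 < k * d := mul_pos hk hd
  have hK : 0 < K := pos_of_mul_pos_left (hkd.trans_le (hD.1.trans hD.2)) hd.le
  rw [Real.rpow_neg_one, ← ENNReal.ofReal_mul (by positivity), ← ENNReal.ofReal_mul (by positivity)]
  constructor <;> refine ENNReal.ofReal_le_ofReal ?_
  · calc K⁻¹ * (d⁻¹ * w) = w / (K * d) := by field_simp
      _ ≤ w / D := div_le_div_of_nonneg_left hw (hkd.trans_le hD.1) hD.2
  · calc w / D ≤ w / (k * d) := div_le_div_of_nonneg_left hw hkd hD.1
      _ = k⁻¹ * (d⁻¹ * w) := by field_simp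

/-- Recurrence criterion for the discrete-time QBD processes associated with the
orthogonal polynomials on the parabolic domain `R = {(x,y) : y² < x < 1}` with weight
`(1−x)^α (x−y²)^β`: for `0 ≤ τ < 1` the Lebesgue integral of the weight divided by
`1 − τx − (1−τ)y` over `R` is infinite iff `α + β ≤ −1`; for `τ = 1` the integral of
`(1−x)^{α−1}(x−y²)^β` over `R` is infinite iff `α ≤ 0`. -/
theorem stmt_5 (α β : ℝ) (hα : -1 < α) (hβ : -1 < β) :
    (∀ τ : ℝ, 0 ≤ τ → τ < 1 →
      ((∫⁻ p : ℝ × ℝ in {p : ℝ × ℝ | p.2 ^ 2 < p.1 ∧ p.1 < 1},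
          ENNReal.ofReal ((1 - p.1) ^ α * (p.1 - p.2 ^ 2) ^ β /
            (1 - τ * p.1 - (1 - τ) * p.2))) = ⊤ ↔ α + β ≤ -1)) ∧
    ((∫⁻ p : ℝ × ℝ in {p : ℝ × ℝ | p.2 ^ 2 < p.1 ∧ p.1 < 1},
        ENNReal.ofReal ((1 - p.1) ^ (α - 1) * (p.1 - p.2 ^ 2) ^ β)) = ⊤
      ↔ α ≤ 0) := by
  refine ⟨fun τ hτ0 hτ1 => ?_, ?_⟩
  · have hbounds (p : ℝ × ℝ) (hp : p ∈ parabolicDomain) :=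
      ofReal_div_bounds_of_mem_Icc (w := (1 - p.1) ^ α * (p.1 - p.2 ^ 2) ^ β)
        (mul_nonneg (Real.rpow_nonneg (sub_nonneg.2 hp.2.le) α)
          (Real.rpow_nonneg (sub_nonneg.2 hp.1.le) β))
        (sub_pos.2 hτ1) (by nlinarith [hp.1, hp.2])
        (sub_mul_sub_mul_mem_Icc_of_mem_parabolicDomain hτ0 hτ1 hp)
    refine (lintegral_eq_top_iff_of_le_of_le (ENNReal.ofReal_pos.2 (by norm_num)).ne'
      ENNReal.ofReal_ne_top
      (ae_restrict_of_forall_mem measurableSet_parabolicDomain fun p hp => (hbounds p hp).1)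
      (ae_restrict_of_forall_mem measurableSet_parabolicDomain fun p hp => (hbounds p hp).2)).trans
      ((lintegral_parabolicDomain_rpow_eq_top_iff α β (-1)).trans ?_)
    exact ⟨by rintro (h | h | h | h) <;> linarith, fun h => Or.inl (by linarith)⟩
  · have h := lintegral_parabolicDomain_rpow_eq_top_iff (α - 1) β 0
    simp only [Real.rpow_zero, one_mul] at h
    exact h.trans ⟨by rintro (h | h | h | h) <;> linarith,
      fun h => Or.inr (Or.inr (Or.inl (by linarith)))⟩
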